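/- Let μ > 0, α < 0, N a positive integer, and ω > α²/N². Set a⁰(ω) = (1/(μ√ω)) arctanh(|α|/(N√ω)). Then the squared L² norm of the N-tail state satisfies M(ω) := N ∫₀^∞ φ_{ω,−a⁰(ω)}(x)² dx = (N (μ+1)^{1/μ} / μ) · ω^{1/μ − 1/2} · ∫_{|α|/(N√ω)}^{1} (1 − t²)^{1/μ − 1} dt. -/

import Mathlib

/-!
Since `1 - tanh² = sech²`, the squared profile is
`φ_{ω,-a}(x)² = ((μ+1)ω)^{1/μ} (1 - tanh² (μ√ω (x + a)))^{1/μ}`. The substitution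
`t = tanh (μ√ω (x + a))`, with `dt = μ√ω (1 - t²) dx`, maps `(0, ∞)` onto `(tanh (μ√ω a), 1)`,
and for `a = a⁰(ω)` the lower endpoint is `tanh (arctanh (|α|/(N√ω))) = |α|/(N√ω)`.
-/

open MeasureTheory Set intervalIntegral

/-- The soliton profile `φ_{ω,a}(x) = ((μ+1)ω)^{1/(2μ)} sech^{1/μ}(μ√ω (x − a))`. -/
noncomputable def solitonProfile (μ ω a : ℝ) (x : ℝ) : ℝ :=
  ((μ + 1) * ω) ^ (1 / (2 * μ)) *
    (1 / Real.cosh (μ * Real.sqrt ω * (x - a))) ^ (1 / μ)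

/-- The inverse hyperbolic tangent. -/
noncomputable def arctanh (x : ℝ) : ℝ := (1 / 2) * Real.log ((1 + x) / (1 - x))

namespace Real

theorem hasDerivAt_tanh (x : ℝ) : HasDerivAt tanh (1 - tanh x ^ 2) x := by
  have hcosh := (cosh_pos x).ne'
  have h := (hasDerivAt_sinh x).div (hasDerivAt_cosh x) hcosh
  rw [show sinh / cosh = tanh from funext fun y => (tanh_eq_sinh_div_cosh y).symm] at h
  refine h.congr_deriv ?_
  rw [tanh_eq_sinh_div_cosh]
  field_simp

theorem tanh_strictMono : StrictMono tanh := by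
  intro x y hxy
  by_contra! h
  have := strictMonoOn_artanh.monotoneOn
    ⟨neg_one_lt_tanh y, tanh_lt_one y⟩ ⟨neg_one_lt_tanh x, tanh_lt_one x⟩ h
  rw [artanh_tanh, artanh_tanh] at this
  exact this.not_gt hxy

theorem image_tanh_Ioi (b : ℝ) : tanh '' Ioi b = Ioo (tanh b) 1 := by
  ext t
  constructor
  · rintro ⟨x, hx, rfl⟩
    exact ⟨tanh_strictMono hx, tanh_lt_one x⟩
  · rintro ⟨hbt, ht1⟩
    have ht : t ∈ Ioo (-1) 1 := ⟨(neg_one_lt_tanh b).trans hbt, ht1⟩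
    refine ⟨artanh t, ?_, tanh_artanh ht⟩
    rw [mem_Ioi, ← tanh_strictMono.lt_iff_lt, tanh_artanh ht]
    exact hbt

theorem one_sub_tanh_sq (x : ℝ) : 1 - tanh x ^ 2 = (1 / cosh x) ^ 2 := by
  have hcosh := (cosh_pos x).ne'
  rw [tanh_eq_sinh_div_cosh]
  field_simp
  linarith [cosh_sq_sub_sinh_sq x]

end Real

open Real

theorem tanh_arctanh {x : ℝ} (hx : x ∈ Ioo (-1) 1) : tanh (arctanh x) = x := by
  rw [arctanh, ← artanh_eq_half_log (Ioo_subset_Icc_self hx), tanh_artanh hx]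

theorem integral_Ioi_one_sub_tanh_sq_rpow {c : ℝ} (hc : 0 < c) (d p b : ℝ) :
    c * ∫ x in Ioi b, (1 - tanh (c * (x - d)) ^ 2) ^ p
      = ∫ t in tanh (c * (b - d))..1, (1 - t ^ 2) ^ (p - 1) := by
  set f : ℝ → ℝ := fun x => tanh (c * (x - d))
  have hf_mono : StrictMono f :=
    tanh_strictMono.comp fun x y hxy => mul_lt_mul_of_pos_left (sub_lt_sub_right hxy d) hc
  have hf_image : f '' Ioi b = Ioo (f b) 1 := by
    rw [show f = tanh ∘ (c * ·) ∘ (· - d) from rfl, image_comp, image_comp,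
      image_sub_const_Ioi, image_mul_left_Ioi hc, image_tanh_Ioi]
    rfl
  have hf_deriv : ∀ x ∈ Ioi b, HasDerivWithinAt f (c * (1 - f x ^ 2)) (Ioi b) x := by
    intro x _
    have hcomp := (hasDerivAt_tanh _).comp x (((hasDerivAt_id' x).sub_const d).const_mul c)
    exact (hcomp.congr_deriv (by ring)).hasDerivWithinAt
  have hchange := integral_image_eq_integral_abs_deriv_smul measurableSet_Ioi hf_deriv
    hf_mono.injective.injOn fun t => (1 - t ^ 2) ^ (p - 1)
  rw [hf_image] at hchange
  rw [intervalIntegral.integral_of_le (tanh_lt_one _).le, integral_Ioc_eq_integral_Ioo,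
    hchange, ← MeasureTheory.integral_const_mul]
  refine setIntegral_congr_fun measurableSet_Ioi fun x _ => ?_
  have hpos : 0 < 1 - f x ^ 2 := sub_pos.2 (tanh_sq_lt_one _)
  rw [smul_eq_mul, abs_of_pos (mul_pos hc hpos), rpow_sub_one hpos.ne']
  field_simp
  rfl

theorem solitonProfile_sq {μ ω : ℝ} (h : 0 ≤ (μ + 1) * ω) (a x : ℝ) :
    solitonProfile μ ω a x ^ 2
      = ((μ + 1) * ω) ^ (1 / μ) * (1 - tanh (μ * √ω * (x - a)) ^ 2) ^ (1 / μ) := by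
  rw [solitonProfile, mul_pow, one_sub_tanh_sq, ← rpow_pow_comm (by positivity),
    ← rpow_mul_natCast h]
  congr 2
  push_cast
  ring

theorem stmt_9_general (μ α : ℝ) (hμ : 0 < μ) (N : ℕ)
    (ω : ℝ) (hω : ω > α ^ 2 / (N : ℝ) ^ 2)
    (a₀ : ℝ) (ha₀ : a₀ = 1 / (μ * Real.sqrt ω) * arctanh (|α| / (N * Real.sqrt ω))) :
    -- the squared L² norm of the N-tail state `Ψ⁰_ω`
    (N : ℝ) * (∫ x in Ioi (0 : ℝ), (solitonProfile μ ω (-a₀) x) ^ 2)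
      = ((N : ℝ) * (μ + 1) ^ (1 / μ) / μ) * ω ^ (1 / μ - 1 / 2) *
        ∫ t in (|α| / (N * Real.sqrt ω))..1, (1 - t ^ 2) ^ (1 / μ - 1) := by
  have hω0 : 0 < ω := lt_of_le_of_lt (by positivity) hω
  have hc : 0 < μ * √ω := mul_pos hμ (sqrt_pos.2 hω0)
  set s₀ := |α| / (N * √ω)
  have hs₀ : s₀ ∈ Ioo (-1) 1 := by
    have hs₀_nonneg : 0 ≤ s₀ := by positivity
    refine ⟨by linarith, (pow_lt_one_iff_of_nonneg hs₀_nonneg two_ne_zero).1 ?_⟩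
    rw [div_pow, mul_pow, sq_abs, sq_sqrt hω0.le, ← div_div]
    exact (div_lt_one hω0).2 hω
  have htanh : tanh (μ * √ω * (0 - -a₀)) = s₀ := by
    rw [zero_sub, neg_neg, ha₀, ← mul_assoc, mul_one_div_cancel hc.ne', one_mul,
      tanh_arctanh hs₀]
  simp_rw [solitonProfile_sq (by positivity : 0 ≤ (μ + 1) * ω)]
  rw [MeasureTheory.integral_const_mul, ← htanh, ← integral_Ioi_one_sub_tanh_sq_rpow hc,
    mul_rpow (by positivity) hω0.le, sqrt_eq_rpow, rpow_sub hω0]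
  field_simp

theorem stmt_9 (μ α : ℝ) (hμ : 0 < μ) (hα : α < 0) (N : ℕ) (hN : 0 < N)
    (ω : ℝ) (hω : ω > α ^ 2 / (N : ℝ) ^ 2)
    (a₀ : ℝ) (ha₀ : a₀ = 1 / (μ * Real.sqrt ω) * arctanh (|α| / (N * Real.sqrt ω))) :
    -- the squared L² norm of the N-tail state `Ψ⁰_ω`
    (N : ℝ) * (∫ x in Ioi (0 : ℝ), (solitonProfile μ ω (-a₀) x) ^ 2)
      = ((N : ℝ) * (μ + 1) ^ (1 / μ) / μ) * ω ^ (1 / μ - 1 / 2) *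
        ∫ t in (|α| / (N * Real.sqrt ω))..1, (1 - t ^ 2) ^ (1 / μ - 1) :=
  stmt_9_general μ α hμ N ω hω a₀ ha₀
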